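/- Let θ₁,…,θ_n ∈ [0,π) with Σⱼ θⱼ = kπ for an integer k. If each qubit of the GHZ state (1/√2)(|0ⁿ⟩+|1ⁿ⟩) is measured in the basis {|+_{θⱼ}⟩, |−_{θⱼ}⟩} with |±_{θ}⟩ = (1/√2)(|0⟩ ± e^{iθ}|1⟩) yielding outcomes Yⱼ ∈ {0,1}, then with probability 1 the outcomes satisfy ⊕ⱼ Yⱼ = k mod 2. -/
import Mathlib

/-- The n-qubit GHZ state (1/√2)(|0ⁿ⟩+|1ⁿ⟩). -/
noncomputable def ghzF (n : ℕ) : (Fin n → Bool) → ℂ := fun y =>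
  if y = (fun _ => false) then (((Real.sqrt 2)⁻¹ : ℝ) : ℂ)
  else if y = (fun _ => true) then (((Real.sqrt 2)⁻¹ : ℝ) : ℂ)
  else 0

/-- Amplitude of obtaining outcomes Y when qubit j of the GHZ state is measured in the
    basis {|+_{θⱼ}⟩, |−_{θⱼ}⟩}, |±_θ⟩ = (1/√2)(|0⟩ ± e^{iθ}|1⟩) (Y j = true means −). -/
noncomputable def measAmp (n : ℕ) (θ : Fin n → ℝ) (Y : Fin n → Bool) : ℂ :=
  ∑ y : Fin n → Bool,
    (starRingEnd ℂ)
      (∏ j, (((Real.sqrt 2)⁻¹ : ℝ) : ℂ) *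
        (if y j then (if Y j then -1 else 1) * Complex.exp (Complex.I * (θ j : ℂ)) else 1))
      * ghzF n y

/-- abbreviation for the amplitude 1/√2 as a complex number -/
noncomputable def rC : ℂ := (((Real.sqrt 2)⁻¹ : ℝ) : ℂ)

lemma rC_def : (((Real.sqrt 2)⁻¹ : ℝ) : ℂ) = rC := rfl

lemma rC_ne : rC ≠ 0 := by
  simp [rC, Complex.ofReal_ne_zero, Real.sqrt_eq_zero']

lemma rC_def' : (((Real.sqrt 2 : ℝ) : ℂ))⁻¹ = rC := by
  rw [← rC_def, Complex.ofReal_inv]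

lemma rC_conj : (starRingEnd ℂ) rC = rC := Complex.conj_ofReal _

theorem stmt16 (n : ℕ) (θ : Fin n → ℝ) (hθ : ∀ j, 0 ≤ θ j ∧ θ j < Real.pi)
    (k : ℤ) (hsum : ∑ j, θ j = k * Real.pi)
    (Y : Fin n → Bool) (hY : measAmp n θ Y ≠ 0) :
    (∑ j, (if Y j then 1 else 0) : ZMod 2) = (k : ZMod 2) := by
  classical
  rcases Nat.eq_zero_or_pos n with hn | hn
  · subst hn
    have hk : (k : ℝ) * Real.pi = 0 := by rw [← hsum]; simp
    have hk0 : k = 0 := by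
      rcases mul_eq_zero.mp hk with h | h
      · exact_mod_cast h
      · exact absurd h Real.pi_ne_zero
    subst hk0; simp
  · set m : ℕ := ∑ j, (if Y j then 1 else 0 : ℕ) with hm
    have hFT : (fun _ : Fin n => false) ≠ (fun _ : Fin n => true) := by
      intro h
      have := congrFun h ⟨0, hn⟩
      simp at this
    have hghzF : ghzF n (fun _ => false) = rC := by
      simp [ghzF, rC_def']
    have hghzT : ghzF n (fun _ => true) = rC := by
      simp [ghzF, rC_def', hFT.symm]
    have hsign : (∏ j, (if Y j then (-1 : ℂ) else 1)) = (-1) ^ m := by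
      rw [hm, ← Finset.prod_pow_eq_pow_sum]
      exact Finset.prod_congr rfl (fun j _ => by by_cases h : Y j <;> simp [h])
    have hexp : (∏ j, Complex.exp (Complex.I * (θ j : ℂ)))
        = Complex.exp ((k : ℂ) * ((Real.pi : ℂ) * Complex.I)) := by
      rw [← Complex.exp_sum]
      congr 1
      rw [← Finset.mul_sum, ← Complex.ofReal_sum, hsum]
      push_cast
      ring
    have e1 : (∏ j : Fin n, rC *
        (if (fun _ : Fin n => false) j then
          (if Y j then (-1:ℂ) else 1) * Complex.exp (Complex.I * (θ j : ℂ)) else 1))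
        = rC ^ n := by
      simp
    have e2 : (∏ j : Fin n, rC *
        (if (fun _ : Fin n => true) j then
          (if Y j then (-1:ℂ) else 1) * Complex.exp (Complex.I * (θ j : ℂ)) else 1))
        = rC ^ n * ((-1) ^ m * Complex.exp ((k : ℂ) * ((Real.pi : ℂ) * Complex.I))) := by
      have step : ∀ j : Fin n, rC *
          (if (fun _ : Fin n => true) j then
            (if Y j then (-1:ℂ) else 1) * Complex.exp (Complex.I * (θ j : ℂ)) else 1)
          = rC * ((if Y j then (-1:ℂ) else 1) * Complex.exp (Complex.I * (θ j : ℂ))) :=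
        fun j => by simp
      rw [Finset.prod_congr rfl (fun j _ => step j), Finset.prod_mul_distrib,
        Finset.prod_const, Finset.card_univ, Fintype.card_fin,
        Finset.prod_mul_distrib, hsign, hexp]
    have hconjexp : (starRingEnd ℂ) (Complex.exp ((k : ℂ) * ((Real.pi : ℂ) * Complex.I)))
        = (-1 : ℂ) ^ (-k : ℤ) := by
      rw [← Complex.exp_conj]
      have h1 : (starRingEnd ℂ) ((k : ℂ) * ((Real.pi : ℂ) * Complex.I))
          = ((-k : ℤ) : ℂ) * ((Real.pi : ℂ) * Complex.I) := by
        simp only [map_mul, Complex.conj_I, Complex.conj_ofReal, map_intCast]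
        push_cast
        ring
      rw [h1, Complex.exp_int_mul, Complex.exp_pi_mul_I]
    have hvanish : ∀ x ∈ (Finset.univ : Finset (Fin n → Bool)),
        x ∉ ({fun _ => false, fun _ => true} : Finset (Fin n → Bool)) →
        (starRingEnd ℂ)
          (∏ j, (((Real.sqrt 2)⁻¹ : ℝ) : ℂ) *
            (if x j then (if Y j then -1 else 1) * Complex.exp (Complex.I * (θ j : ℂ)) else 1))
          * ghzF n x = 0 := by
      intro x _ hx
      simp only [Finset.mem_insert, Finset.mem_singleton, not_or] at hx
      simp [ghzF, hx.1, hx.2]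
    rw [measAmp,
      ← Finset.sum_subset (Finset.subset_univ
        ({fun _ => false, fun _ => true} : Finset (Fin n → Bool))) hvanish,
      Finset.sum_pair hFT, rC_def, e1, e2, hghzF, hghzT] at hY
    rw [map_mul, map_mul, map_pow, rC_conj, map_pow, hconjexp] at hY
    have hconjm : (starRingEnd ℂ) (-1 : ℂ) = -1 := by simp
    rw [hconjm] at hY
    have hne1 : (1 : ℂ) + (-1) ^ m * (-1 : ℂ) ^ (-k : ℤ) ≠ 0 := by
      intro h
      apply hY
      have : rC ^ n * rC + rC ^ n * ((-1 : ℂ) ^ m * (-1 : ℂ) ^ (-k : ℤ)) * rC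
          = rC ^ n * rC * (1 + (-1) ^ m * (-1 : ℂ) ^ (-k : ℤ)) := by ring
      rw [this, h, mul_zero]
    have key : (-1 : ℂ) ^ m * (-1 : ℂ) ^ (-k : ℤ) = (-1 : ℂ) ^ ((m : ℤ) - k) := by
      rw [← zpow_natCast (-1 : ℂ) m, ← zpow_add₀ (by norm_num : (-1:ℂ) ≠ 0)]
      ring_nf
    have heven : Even ((m : ℤ) - k) := by
      by_contra hodd
      rw [Int.not_even_iff_odd] at hodd
      apply hne1
      rw [key, hodd.neg_one_zpow]
      ring
    have hz : (((m : ℤ) - k : ℤ) : ZMod 2) = 0 :=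
      (ZMod.intCast_zmod_eq_zero_iff_dvd _ 2).mpr heven.two_dvd
    push_cast at hz
    have hmk : ((m : ZMod 2)) = (k : ZMod 2) := by linear_combination hz
    rw [← hmk, hm]
    push_cast
    exact Finset.sum_congr rfl (fun j _ => by by_cases h : Y j <;> simp [h])
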